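/- For all n ≥ k ≥ 2 and r ≥ 2, A_k(n;r,1) > m_k(n; r, 1), i.e., there exists an r-coloring of the k-subsets of [m_k(n;r,1)] with no monochromatic tight monotone path of length n. -/

import Mathlib

/-- The `(j)`-fold iterated power set of a type `α`. -/
abbrev IterSet (α : Type) : ℕ → Type
  | 0 => α
  | j + 1 => Set (IterSet α j)

/-- The generalized `S`-less relation `<_S^{(j+2)}` on the `j`-fold iterated
power set of `[n]^R` (vectors are `Fin R → Fin n`): at level `0` (i.e. `k = 2`),
`x <_S y` iff `x ℓ < y ℓ` in at least `S` coordinates; at level `j + 1`,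
`F <_S F'` iff some distinguished `G ∈ F'` satisfies `H <_S G` for all `H ∈ F`. -/
def GenRel (n R S : ℕ) : (j : ℕ) → IterSet (Fin R → Fin n) j → IterSet (Fin R → Fin n) j → Prop
  | 0, x, y => S ≤ (Finset.univ.filter fun ℓ => x ℓ < y ℓ).card
  | j + 1, F, F' => ∃ G ∈ F', ∀ H ∈ F, GenRel n R S j H G

/-- `m_k(n; R, S)`: the maximum length of a generalized `S`-increasing
sequence in the `(k-2)`-fold iterated power set of `[n]^R`. -/
noncomputable def mGen (k n R S : ℕ) : ℕ :=
  sSup {t : ℕ | ∃ f : Fin t → IterSet (Fin R → Fin n) (k - 2),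
    ∀ i j : Fin t, i < j → GenRel n R S (k - 2) (f i) (f j)}

/-- `A_k(n; r, s)`: the least `N` such that every `r`-coloring of the
`k`-element subsets of `[N]` (identified with `{0, …, N-1}`) contains a tight
monotone path with `n` edges using at most `s` colors. -/
noncomputable def colorAvoidA (k n r s : ℕ) : ℕ :=
  sInf {N : ℕ | ∀ Δ : Finset ℕ → Fin r,
    ∃ w : ℕ → ℕ, (∀ i < n + k - 2, w i < w (i + 1)) ∧ (∀ i ≤ n + k - 2, w i < N) ∧
      ((Finset.range n).image fun i => Δ ((Finset.Icc i (i + k - 1)).image w)).card ≤ s}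


/-!
Both bounds go through maps `ψ` from increasing `q`-tuples to the `j`-fold iterated power set
with `ψ (init t) <_S ψ (tail t)` for every increasing `(q + 1)`-tuple `t`; for `q = 1` these are
`S`-increasing sequences. Choosing the distinguished element turns such a map at level `j + 1`
into one on `(q + 1)`-tuples at level `j`, and `u ↦ {ψ s | tail s = u}` goes back up. So an
`S`-increasing sequence of length `N` at level `k - 2` exists iff such a map exists on the
`(k - 1)`-tuples of `[N]` with values in `[n]^r`.

For `S = 1`, a coordinate in which `ψ (init t) < ψ (tail t)` is a color of the `k`-set `t`: along
a monochromatic tight path with `n` edges that coordinate would increase `n` times inside `[n]`.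
Conversely, given a coloring of `[N]` without such a path, sending `u` to the lengths of the
longest monochromatic paths ending in `u`, one for each color, is such a map. Hence
`A_k(n; r, 1) = m_k(n; r, 1) + 1`.
-/

open Finset

theorem IterSet.nonempty (α : Type) [Nonempty α] : ∀ j, Nonempty (IterSet α j)
  | 0 => ‹Nonempty α›
  | j + 1 => .intro (∅ : Set (IterSet α j))

theorem IterSet.finite (α : Type) [Finite α] : ∀ j, Finite (IterSet α j)
  | 0 => ‹Finite α›
  | j + 1 => have := IterSet.finite α j; Set.instFinite

section GenRel

variable {n R S : ℕ}

theorem genRel_irrefl (hS : 0 < S) : ∀ j (x : IterSet (Fin R → Fin n) j), ¬ GenRel n R S j x x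
  | 0, x, h => by simp [GenRel] at h; omega
  | j + 1, _, ⟨G, hG, hall⟩ => genRel_irrefl hS j G (hall G hG)

theorem genRel_zero_one_iff {x y : Fin R → Fin n} : GenRel n R 1 0 x y ↔ ∃ ℓ, x ℓ < y ℓ := by
  simp [GenRel, Finset.one_le_card, Finset.filter_nonempty_iff]

variable {k : ℕ}

theorem bddAbove_setOf_genRel_chain (hS : 0 < S) :
    BddAbove {t : ℕ | ∃ f : Fin t → IterSet (Fin R → Fin n) (k - 2),
      ∀ i j : Fin t, i < j → GenRel n R S (k - 2) (f i) (f j)} := by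
  have := IterSet.finite (Fin R → Fin n) (k - 2)
  refine ⟨Nat.card (IterSet (Fin R → Fin n) (k - 2)), ?_⟩
  rintro t ⟨f, hf⟩
  have hf_inj : Function.Injective f := fun i j hij => by
    by_contra hne
    rcases lt_or_gt_of_ne hne with h | h
    · exact genRel_irrefl hS _ (f j) (hij ▸ hf i j h)
    · exact genRel_irrefl hS _ (f i) (hij ▸ hf j i h)
  simpa using Nat.card_le_card_of_injective f hf_inj

theorem le_mGen (hS : 0 < S) {t : ℕ} (f : Fin t → IterSet (Fin R → Fin n) (k - 2))
    (hf : ∀ i j : Fin t, i < j → GenRel n R S (k - 2) (f i) (f j)) : t ≤ mGen k n R S :=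
  le_csSup (bddAbove_setOf_genRel_chain hS) ⟨f, hf⟩

theorem exists_genRel_chain_mGen (hS : 0 < S) :
    ∃ f : Fin (mGen k n R S) → IterSet (Fin R → Fin n) (k - 2),
      ∀ i j, i < j → GenRel n R S (k - 2) (f i) (f j) := by
  refine Nat.sSup_mem ?_ (bddAbove_setOf_genRel_chain hS)
  exact ⟨0, Fin.elim0, fun i => i.elim0⟩

end GenRel

section ShiftChain

variable {ι β : Type*} [Preorder ι]

def IsShiftChain (rel : β → β → Prop) {q : ℕ} (ψ : (Fin q → ι) → β) : Prop :=
  ∀ t : Fin (q + 1) → ι, StrictMono t → rel (ψ (Fin.init t)) (ψ (Fin.tail t))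

theorem isShiftChain_apply_zero {rel : β → β → Prop} {f : ι → β}
    (hf : ∀ a b, a < b → rel (f a) (f b)) : IsShiftChain rel fun s : Fin 1 → ι => f (s 0) :=
  fun t ht => hf _ _ (ht (show (0 : Fin 2) < 1 by decide))

theorem IsShiftChain.rel_of_lt {rel : β → β → Prop} {ψ : (Fin 1 → ι) → β}
    (hψ : IsShiftChain rel ψ) {a b : ι} (hab : a < b) : rel (ψ fun _ => a) (ψ fun _ => b) := by
  have h := hψ ![a, b] (Fin.strictMono_iff_lt_succ.2 fun i => by fin_cases i; exact hab)
  convert h using 2 <;> funext i <;> fin_cases i <;> rfl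

variable {n R S : ℕ}

theorem IsShiftChain.exists_of_genRel_succ [NeZero n] {q j : ℕ}
    {ψ : (Fin q → ι) → IterSet (Fin R → Fin n) (j + 1)}
    (hψ : IsShiftChain (GenRel n R S (j + 1)) ψ) :
    ∃ φ : (Fin (q + 1) → ι) → IterSet (Fin R → Fin n) j, IsShiftChain (GenRel n R S j) φ := by
  have := IterSet.nonempty (Fin R → Fin n) j
  choose! φ hφ_mem hφ_rel using hψ
  refine ⟨φ, fun t ht => hφ_rel (Fin.tail t) (ht.comp Fin.strictMono_succ) _ ?_⟩
  rw [← Fin.tail_init_eq_init_tail]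
  exact hφ_mem _ (ht.comp Fin.strictMono_castSucc)

theorem IsShiftChain.exists_genRel_succ {q j : ℕ}
    {ψ : (Fin (q + 2) → ι) → IterSet (Fin R → Fin n) j}
    (hψ : IsShiftChain (GenRel n R S j) ψ) :
    ∃ φ : (Fin (q + 1) → ι) → IterSet (Fin R → Fin n) (j + 1),
      IsShiftChain (GenRel n R S (j + 1)) φ := by
  refine ⟨fun u => {x | ∃ s, StrictMono s ∧ Fin.tail s = u ∧ ψ s = x},
    fun t ht => ⟨ψ t, ⟨t, ht, rfl, rfl⟩, ?_⟩⟩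
  rintro _ ⟨s, hs, hst, rfl⟩
  have h_init : Fin.init (Fin.cons (s 0) t : Fin (q + 3) → ι) = s := by
    funext i
    cases i using Fin.cases with
    | zero => rfl
    | succ i => simpa [Fin.init, Fin.tail, ← Fin.succ_castSucc] using (congrFun hst i).symm
  have h_mono : StrictMono (Fin.cons (s 0) t : Fin (q + 3) → ι) := by
    refine Fin.strictMono_cons.2 ⟨fun i => ?_, ht⟩
    calc s 0 < s 1 := hs Fin.zero_lt_one
      _ = t 0 := congrFun hst 0
      _ ≤ t i := ht.monotone (Fin.zero_le i)
  simpa [h_init] using hψ _ h_mono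

theorem IsShiftChain.exists_genRel_zero [NeZero n] (j : ℕ) :
    ∀ {q : ℕ} {ψ : (Fin q → ι) → IterSet (Fin R → Fin n) j},
      IsShiftChain (GenRel n R S j) ψ →
      ∃ φ : (Fin (j + q) → ι) → IterSet (Fin R → Fin n) 0, IsShiftChain (GenRel n R S 0) φ := by
  induction j with
  | zero =>
    intro q
    rw [Nat.zero_add]
    exact fun hψ => ⟨_, hψ⟩
  | succ j ih =>
    intro q
    rw [Nat.succ_add]
    exact fun hψ => hψ.exists_of_genRel_succ.elim fun _ hφ => ih hφ

theorem IsShiftChain.exists_of_genRel_zero (j : ℕ) :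
    ∀ {q : ℕ} {ψ : (Fin (j + (q + 1)) → ι) → IterSet (Fin R → Fin n) 0},
      IsShiftChain (GenRel n R S 0) ψ →
      ∃ φ : (Fin (q + 1) → ι) → IterSet (Fin R → Fin n) j, IsShiftChain (GenRel n R S j) φ := by
  induction j with
  | zero =>
    intro q
    rw [Nat.zero_add]
    exact fun hψ => ⟨_, hψ⟩
  | succ j ih =>
    intro q
    rw [Nat.succ_add]
    exact fun hψ => (ih hψ).elim fun _ hφ => hφ.exists_genRel_succ

end ShiftChain

section MonoPath

variable {γ : Type*}

/-- The edges are the `(K + 2)`-sets `w '' [i, i + K + 1]`, so `K = k - 2`. -/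
def IsMonoPath (Δ : Finset ℕ → γ) (K N e : ℕ) (c : γ) (w : ℕ → ℕ) : Prop :=
  (∀ i < e + K, w i < w (i + 1)) ∧ (∀ i ≤ e + K, w i < N) ∧
    ∀ i < e, Δ ((Icc i (i + K + 1)).image w) = c

def IsMonoPathTo (Δ : Finset ℕ → γ) (K N e : ℕ) (c : γ) (s : Fin (K + 1) → Fin N) : Prop :=
  ∃ w, IsMonoPath Δ K N e c w ∧ ∀ j : Fin (K + 1), w (e + j) = s j

variable {Δ : Finset ℕ → γ} {K N e : ℕ} {c : γ}

theorem IsMonoPath.mono {w : ℕ → ℕ} (h : IsMonoPath Δ K N e c w) {e' N' : ℕ} (he : e' ≤ e)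
    (hN : N ≤ N') : IsMonoPath Δ K N' e' c w :=
  ⟨fun i hi => h.1 i (by omega), fun i hi => (h.2.1 i (by omega)).trans_le hN,
    fun i hi => h.2.2 i (by omega)⟩

theorem image_Icc_eq_image_univ (w : ℕ → ℕ) (i K : ℕ) :
    (Icc i (i + K + 1)).image w = univ.image fun j : Fin (K + 2) => w (i + j) := by
  ext a
  simp only [mem_image, mem_Icc, mem_univ, true_and]
  constructor
  · rintro ⟨b, ⟨hib, hbi⟩, rfl⟩
    exact ⟨⟨b - i, by omega⟩, by simp only; congr; omega⟩
  · rintro ⟨j, rfl⟩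
    exact ⟨i + j, ⟨by omega, by omega⟩, rfl⟩

theorem isMonoPathTo_zero {s : Fin (K + 1) → Fin N} (hs : StrictMono s) :
    IsMonoPathTo Δ K N 0 c s := by
  refine ⟨fun x => if h : x < K + 1 then s ⟨x, h⟩ else 0, ⟨fun i hi => ?_, fun i hi => ?_,
    fun i hi => absurd hi i.not_lt_zero⟩, fun j => by simp only [Nat.zero_add, dif_pos j.is_lt]⟩
  · simp only [dif_pos (show i < K + 1 by omega), dif_pos (show i + 1 < K + 1 by omega)]
    exact hs (Fin.mk_lt_mk.2 i.lt_succ_self)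
  · simp only [dif_pos (show i < K + 1 by omega), Fin.is_lt]

theorem IsMonoPathTo.succ {t : Fin (K + 2) → Fin N} (h : IsMonoPathTo Δ K N e c (Fin.init t))
    (ht : StrictMono t) (hc : Δ (univ.image fun j => (t j : ℕ)) = c) :
    IsMonoPathTo Δ K N (e + 1) c (Fin.tail t) := by
  obtain ⟨w, ⟨hinc, hlt, hcol⟩, hend⟩ := h
  set w' := Function.update w (e + K + 1) (t (Fin.last _))
  have hw' : ∀ i ≤ e + K, w' i = w i := fun i hi => Function.update_of_ne (by omega) _ _
  have hwin : ∀ j (hj : j < K + 2), w' (e + j) = t ⟨j, hj⟩ := by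
    intro j hj
    rcases Nat.lt_succ_iff_lt_or_eq.1 hj with hj | rfl
    · rw [hw' _ (by omega)]
      exact hend ⟨j, hj⟩
    · exact Function.update_self ..
  refine ⟨w', ⟨fun i hi => ?_, fun i hi => ?_, fun i hi => ?_⟩, fun j => ?_⟩
  · rcases lt_or_eq_of_le (Nat.le_of_lt_succ (by omega : i < e + K + 1)) with hi | rfl
    · rw [hw' i hi.le, hw' (i + 1) hi]
      exact hinc i hi
    · rw [hwin K (by omega), show e + K + 1 = e + (K + 1) by omega, hwin (K + 1) (by omega)]
      exact ht (Fin.mk_lt_mk.2 K.lt_succ_self)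
  · rcases le_or_gt i (e + K) with hi | hi
    · exact hw' i hi ▸ hlt i hi
    · rw [show i = e + (K + 1) by omega, hwin (K + 1) (by omega)]
      exact Fin.is_lt _
  · rcases Nat.lt_succ_iff_lt_or_eq.1 hi with hi | rfl
    · rw [← hcol i hi]
      exact congrArg Δ <| image_congr fun x hx => hw' x (by have := (mem_Icc.1 hx).2; omega)
    · rw [image_Icc_eq_image_univ, ← hc]
      exact congrArg Δ (image_congr fun j _ => hwin j j.2)
  · rw [show e + 1 + j = e + (j + 1 : ℕ) by omega, hwin _ (by omega)]
    rfl

end MonoPath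

theorem StrictMono.eq_of_image_univ_eq {α : Type*} [LinearOrder α] {q : ℕ} {f g : Fin q → α}
    (hf : StrictMono f) (hg : StrictMono g) (h : univ.image f = univ.image g) : f = g :=
  (hf.range_inj hg).1 (by simpa using congrArg (fun s : Finset α => (s : Set α)) h)

section LevelZero

variable {n R : ℕ}

theorem IsShiftChain.exists_coloring [NeZero R] {q m : ℕ} {ψ : (Fin q → Fin m) → Fin R → Fin n}
    (hψ : IsShiftChain (GenRel n R 1 0) ψ) :
    ∃ Δ : Finset ℕ → Fin R, ∀ t : Fin (q + 1) → Fin m, StrictMono t →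
      ψ (Fin.init t) (Δ (univ.image fun j => (t j : ℕ))) <
        ψ (Fin.tail t) (Δ (univ.image fun j => (t j : ℕ))) := by
  choose col hcol using fun t : {t : Fin (q + 1) → Fin m // StrictMono t} =>
    genRel_zero_one_iff.1 (hψ t.1 t.2)
  let vertices (t : {t : Fin (q + 1) → Fin m // StrictMono t}) := univ.image fun j => (t.1 j : ℕ)
  have h_inj : Function.Injective vertices := fun t t' h =>
    Subtype.ext <| funext fun j => Fin.ext <| congrFun
      ((Fin.val_strictMono.comp t.2).eq_of_image_univ_eq (Fin.val_strictMono.comp t'.2) h) j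
  refine ⟨Function.extend vertices col fun _ => 0, fun t ht => ?_⟩
  rw [h_inj.extend_apply col _ ⟨t, ht⟩]
  exact hcol ⟨t, ht⟩

theorem not_isMonoPath_of_lt {K m : ℕ} {ψ : (Fin (K + 1) → Fin m) → Fin R → Fin n}
    {Δ : Finset ℕ → Fin R}
    (hΔ : ∀ t : Fin (K + 2) → Fin m, StrictMono t →
      ψ (Fin.init t) (Δ (univ.image fun j => (t j : ℕ))) <
        ψ (Fin.tail t) (Δ (univ.image fun j => (t j : ℕ))))
    (c : Fin R) (w : ℕ → ℕ) : ¬ IsMonoPath Δ K m n c w := by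
  rintro ⟨hinc, hlt, hcol⟩
  have hw : StrictMono fun i : Fin (n + K + 1) => w i :=
    Fin.strictMono_iff_lt_succ.2 fun i => hinc i i.is_lt
  let v (i : Fin (n + 1)) (j : Fin (K + 1)) : Fin m := ⟨w (i + j), hlt _ (by omega)⟩
  have hstep (i : Fin n) : ψ (v i.castSucc) c < ψ (v i.succ) c := by
    let t (j : Fin (K + 2)) : Fin m := ⟨w (i + j), hlt _ (by omega)⟩
    have ht : StrictMono t := fun a b hab =>
      hw (show (⟨i + a, by omega⟩ : Fin (n + K + 1)) < ⟨i + b, by omega⟩ from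
        Nat.add_lt_add_left hab i)
    have h_tail : Fin.tail t = v i.succ :=
      funext fun j => Fin.ext <| congrArg w (by simp only [Fin.val_succ]; omega)
    have h_color : Δ (univ.image fun j => (t j : ℕ)) = c := by
      rw [← hcol i i.is_lt, image_Icc_eq_image_univ]
    have h := hΔ t ht
    rw [h_color, h_tail] at h
    exact h
  have h_mono : StrictMono fun i => ψ (v i) c := Fin.strictMono_iff_lt_succ.2 hstep
  simpa using Fintype.card_le_of_injective _ h_mono.injective

theorem exists_isShiftChain_of_forall_not_isMonoPath [NeZero n] {K N : ℕ}
    {Δ : Finset ℕ → Fin R} (hΔ : ∀ c w, ¬ IsMonoPath Δ K N n c w) :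
    ∃ ψ : (Fin (K + 1) → Fin N) → Fin R → Fin n, IsShiftChain (GenRel n R 1 0) ψ := by
  classical
  have h_lt {e c s} (h : IsMonoPathTo Δ K N e c s) : e < n := by
    obtain ⟨w, hw, -⟩ := h
    by_contra! he
    exact hΔ c w (hw.mono he le_rfl)
  refine ⟨fun s c => ⟨Nat.findGreatest (IsMonoPathTo Δ K N · c s) (n - 1),
    (Nat.findGreatest_le _).trans_lt (Nat.sub_lt (NeZero.pos n) one_pos)⟩,
    fun t ht => genRel_zero_one_iff.2 ⟨Δ (univ.image fun j => (t j : ℕ)), ?_⟩⟩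
  set c := Δ (univ.image fun j => (t j : ℕ))
  have h_init := Nat.findGreatest_spec (P := (IsMonoPathTo Δ K N · c (Fin.init t))) (n := n - 1)
    (Nat.zero_le _) (isMonoPathTo_zero (ht.comp Fin.strictMono_castSucc))
  have h_tail := h_init.succ ht rfl
  exact Nat.lt_of_succ_le (Nat.le_findGreatest (Nat.le_sub_one_of_lt (h_lt h_tail)) h_tail)

end LevelZero

section Bounds

variable {K n r : ℕ}

theorem colorAvoidA_add_two_one_eq_sInf [NeZero r] :
    colorAvoidA (K + 2) n r 1 =
      sInf {N | ∀ Δ : Finset ℕ → Fin r, ∃ c w, IsMonoPath Δ K N n c w} := by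
  unfold colorAvoidA IsMonoPath
  congr 1
  ext N
  refine forall_congr' fun Δ => ?_
  simp only [card_le_one_iff_subset_singleton, image_subset_iff, mem_range, mem_singleton,
    show n + (K + 2) - 2 = n + K by omega, show ∀ i, i + (K + 2) - 1 = i + K + 1 by omega]
  exact ⟨fun ⟨w, h₁, h₂, c, h₃⟩ => ⟨c, w, h₁, h₂, h₃⟩, fun ⟨c, w, h₁, h₂, h₃⟩ => ⟨w, h₁, h₂, c, h₃⟩⟩

theorem forall_exists_isMonoPath_mGen_add_one [NeZero n] (Δ : Finset ℕ → Fin r) :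
    ∃ c w, IsMonoPath Δ K (mGen (K + 2) n r 1 + 1) n c w := by
  by_contra! hΔ
  obtain ⟨ψ, hψ⟩ := exists_isShiftChain_of_forall_not_isMonoPath hΔ
  obtain ⟨φ, hφ⟩ := hψ.exists_of_genRel_zero K (q := 0)
  have := le_mGen (k := K + 2) one_pos (fun a => φ fun _ => a) fun _ _ => hφ.rel_of_lt
  omega

theorem not_forall_exists_isMonoPath_mGen [NeZero n] [NeZero r] :
    ¬ ∀ Δ : Finset ℕ → Fin r, ∃ c w, IsMonoPath Δ K (mGen (K + 2) n r 1) n c w := by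
  obtain ⟨f, hf⟩ := exists_genRel_chain_mGen (k := K + 2) (n := n) (R := r) one_pos
  obtain ⟨ψ, hψ⟩ := (isShiftChain_apply_zero hf).exists_genRel_zero _
  obtain ⟨Δ, hΔ⟩ := hψ.exists_coloring
  intro h
  obtain ⟨c, w, hw⟩ := h Δ
  exact not_isMonoPath_of_lt hΔ c w hw

theorem colorAvoidA_eq_mGen_add_one [NeZero n] [NeZero r] :
    colorAvoidA (K + 2) n r 1 = mGen (K + 2) n r 1 + 1 := by
  rw [colorAvoidA_add_two_one_eq_sInf, Nat.sInf_upward_closed_eq_succ_iff]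
  · exact ⟨forall_exists_isMonoPath_mGen_add_one, not_forall_exists_isMonoPath_mGen⟩
  · intro N N' hN hmem Δ
    obtain ⟨c, w, hw⟩ := hmem Δ
    exact ⟨c, w, hw.mono le_rfl hN⟩

end Bounds

/-- For all `n ≥ k ≥ 2` and `r ≥ 2`, `A_k(n; r, 1) > m_k(n; r, 1)`: there is
an `r`-coloring of the `k`-subsets of `[m_k(n; r, 1)]` with no monochromatic
tight monotone path of length `n` (here `binom(r,1) = r`, `binom(r-1,0) = 1`). -/
theorem mGen_lt_colorAvoidA_mono (n k r : ℕ) (hk : 2 ≤ k) (hkn : k ≤ n)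
    (hr : 2 ≤ r) :
    mGen k n r 1 < colorAvoidA k n r 1 := by
  obtain ⟨K, rfl⟩ := Nat.exists_eq_add_of_le' hk
  have : NeZero n := ⟨by omega⟩
  have : NeZero r := ⟨by omega⟩
  rw [colorAvoidA_eq_mGen_add_one]
  exact Nat.lt_add_one _
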